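/- arXiv:2007.13901 — 3 statements merged into one kernel-verified Lean document; each statement's English description precedes it below -/
import Mathlib

section
/- Let D be an orientation of a complete multipartite graph with parts X_1,...,X_k (k ≥ 2). If v ∈ X_i is a source vertex, then D has a closed dominating walk if and only if |X_i| = 1. -/
variable {V : Type*}

/-- `S` dominates the digraph with arc relation `A`: every vertex is in `S`
or has an in-neighbour in `S`. -/
def Dom (A : V → V → Prop) (S : Set V) : Prop :=
  ∀ v, v ∈ S ∨ ∃ u ∈ S, A u v

/-- `l` (a nonempty list of visited vertices) is a closed directed walk:
consecutive vertices are joined by arcs and there is an arc from the last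
vertex back to the first (or the walk is the trivial walk at one vertex). -/
def IsClosedWalk (A : V → V → Prop) (l : List V) : Prop :=
  l ≠ [] ∧ l.Chain' A ∧
    (l.length = 1 ∨ ∀ a b, l.head? = some a → l.getLast? = some b → A b a)

/-- The length (number of arcs, with multiplicity) of the closed walk with
vertex list `l`. -/
def walkLength (l : List V) : ℕ := if l.length = 1 then 0 else l.length

/-- `l` is a closed dominating walk. -/
def IsCDW (A : V → V → Prop) (l : List V) : Prop :=
  IsClosedWalk A l ∧ Dom A {v | v ∈ l}

/-- The digraph has a closed dominating walk. -/
def HasCDW (A : V → V → Prop) : Prop := ∃ l, IsCDW A l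

/-- The watchman number: minimum length of a closed dominating walk. -/
noncomputable def watchman (A : V → V → Prop) : ℕ :=
  sInf {n | ∃ l, IsCDW A l ∧ walkLength l = n}

/-- A tournament: loopless, and exactly one arc between any two distinct vertices. -/
def IsTournament (A : V → V → Prop) : Prop :=
  (∀ v, ¬ A v v) ∧ ∀ u v : V, u ≠ v → (A u v ↔ ¬ A v u)

/-- The subdigraph induced on `S` is strongly connected. -/
def StronglyConnectedOn (A : V → V → Prop) (S : Set V) : Prop :=
  ∀ u ∈ S, ∀ v ∈ S, Relation.ReflTransGen (fun a b => a ∈ S ∧ b ∈ S ∧ A a b) u v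

/-- The maximal strongly connected component containing `v`. -/
def StrongComp (A : V → V → Prop) (v : V) : Set V :=
  {u | Relation.ReflTransGen A v u ∧ Relation.ReflTransGen A u v}

/-- The domination number. -/
noncomputable def domNum (A : V → V → Prop) : ℕ :=
  sInf {n | ∃ S : Set V, S.ncard = n ∧ Dom A S}

/-- The total domination number. -/
noncomputable def totalDomNum (A : V → V → Prop) : ℕ :=
  sInf {n | ∃ S : Set V, S.ncard = n ∧ ∀ v, ∃ u ∈ S, u ≠ v ∧ A u v}

/-- An orientation of a complete multipartite graph whose parts are the fibres
of `P`: arcs only between different parts, and exactly one arc between any two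
vertices in different parts. -/
def IsCMPOrientation {ι : Type*} (A : V → V → Prop) (P : V → ι) : Prop :=
  (∀ u v, A u v → P u ≠ P v) ∧ ∀ u v, P u ≠ P v → (A u v ↔ ¬ A v u)

/-!
A source `v` has no in-neighbour, so it lies on every closed dominating walk; and a closed walk
through a source cannot return to it, so it is the trivial walk `[v]`. Hence a closed dominating
walk exists iff `{v}` dominates, i.e. iff `v` has an arc to every other vertex. In a multipartite
orientation a source has arcs to exactly the vertices outside its part, so this says its part is `{v}`.
-/

namespace List

lemma IsChain.head?_eq_of_mem_of_forall_not_rel {A : V → V → Prop} {l : List V} {v : V}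
    (hl : l.IsChain A) (hvl : v ∈ l) (hv : ∀ u, ¬ A u v) : l.head? = some v := by
  induction l with
  | nil => simp at hvl
  | cons a t ih =>
    rcases mem_cons.1 hvl with rfl | hvt
    · rfl
    · exact absurd ((List.isChain_cons.1 hl).1 v (ih hl.tail hvt)) (hv a)

end List

lemma IsClosedWalk.eq_singleton_of_mem_of_source {A : V → V → Prop} {l : List V} {v : V}
    (hl : IsClosedWalk A l) (hvl : v ∈ l) (hv : ∀ u, ¬ A u v) : l = [v] := by
  obtain ⟨hne, hchain, hclosed⟩ := hl
  have hhead : l.head? = some v := hchain.head?_eq_of_mem_of_forall_not_rel hvl hv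
  have hlen : l.length = 1 := hclosed.resolve_right fun h =>
    hv _ (h v (l.getLast hne) hhead (List.getLast?_eq_some_getLast hne))
  obtain ⟨a, rfl⟩ := List.length_eq_one_iff.1 hlen
  simpa using hhead

lemma hasCDW_iff_dom_singleton_of_source {A : V → V → Prop} {v : V} (hv : ∀ u, ¬ A u v) :
    HasCDW A ↔ Dom A {v} := by
  constructor
  · rintro ⟨l, hwalk, hdom⟩
    have hvl : v ∈ l := (hdom v).resolve_right fun ⟨u, _, huv⟩ => hv u huv
    rw [hwalk.eq_singleton_of_mem_of_source hvl hv] at hdom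
    simpa using hdom
  · intro hdom
    exact ⟨[v], ⟨List.cons_ne_nil _ _, List.isChain_singleton _, Or.inl rfl⟩, by simpa using hdom⟩

lemma IsCMPOrientation.rel_iff_of_source {ι : Type*} {A : V → V → Prop} {P : V → ι}
    (hor : IsCMPOrientation A P) {v : V} (hv : ∀ u, ¬ A u v) (u : V) :
    A v u ↔ P u ≠ P v :=
  ⟨fun h => (hor.1 v u h).symm, fun h => (hor.2 v u (Ne.symm h)).2 (hv u)⟩

lemma IsCMPOrientation.dom_singleton_iff_of_source {ι : Type*} {A : V → V → Prop} {P : V → ι}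
    (hor : IsCMPOrientation A P) {v : V} (hv : ∀ u, ¬ A u v) :
    Dom A {v} ↔ {u | P u = P v} = {v} := by
  simp only [Dom, Set.mem_singleton_iff, exists_eq_left, hor.rel_iff_of_source hv,
    Set.ext_iff, Set.mem_ofPred_eq]
  exact ⟨fun h u => ⟨fun hu => (h u).resolve_right (not_not.2 hu), fun hu => hu ▸ rfl⟩,
    fun h u => (em (P u = P v)).imp (h u).1 id⟩

theorem stmt2_general {ι : Type*} (A : V → V → Prop) (P : V → ι)
    (hor : IsCMPOrientation A P) (v : V) (hv : ∀ u, ¬ A u v) :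
    HasCDW A ↔ {u | P u = P v} = {v} :=
  (hasCDW_iff_dom_singleton_of_source hv).trans (hor.dom_singleton_iff_of_source hv)

theorem stmt2 [Fintype V] {ι : Type*} [Fintype ι] (A : V → V → Prop) (P : V → ι)
    (hor : IsCMPOrientation A P) (hk : 2 ≤ Fintype.card ι)
    (hsurj : Function.Surjective P) (v : V) (hv : ∀ u, ¬ A u v) :
    HasCDW A ↔ {u | P u = P v} = {v} :=
  stmt2_general A P hor v hv
end

section
/- Let D be an orientation of a complete k-partite graph, k ≥ 2, in which every vertex has in-degree at least 1. Then the condensation of D has a source vertex whose corresponding strong component is a dominating set of D, and consequently D has a closed dominating walk. -/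
variable {V : Type*}

/-!
Choose `v` whose reachable set is maximal for inclusion; then everything that reaches `v` is
reachable from `v`, so the strong component `C` of `v` has no in-arcs from outside, i.e. it is a
source of the condensation. If some `w ∉ C` had no in-neighbour in `C`, then, as `w` sends no arc
into `C`, every vertex of `C` would lie in the part of `w`. But `v` has an in-neighbour, which lies
in `C` and in a different part from `v`. Finally, a strongly connected set lies on a closed walk,
and a closed walk through a dominating set is a closed dominating walk.
-/

open Relation

namespace List

variable {α : Type*} {R : α → α → Prop}

theorem IsChain.cons_append_of_getLast_eq {a b : α} {l₁ l₂ : List α}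
    (h₁ : IsChain R (a :: l₁)) (hlast : (a :: l₁).getLast (cons_ne_nil a l₁) = b)
    (h₂ : IsChain R (b :: l₂)) : IsChain R (a :: (l₁ ++ l₂)) := by
  rw [← cons_append]
  refine h₁.append h₂.tail fun x hx y hy => ?_
  rw [getLast?_eq_some_getLast (cons_ne_nil a l₁), hlast, Option.mem_some_iff] at hx
  cases l₂ with
  | nil => simp at hy
  | cons z l₂ =>
    obtain rfl : z = y := by simpa using hy
    exact hx ▸ (isChain_cons_cons.1 h₂).1

theorem getLast_cons_append_of_getLast_eq {a b : α} {l₁ l₂ : List α}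
    (hlast : (a :: l₁).getLast (cons_ne_nil a l₁) = b) :
    (a :: (l₁ ++ l₂)).getLast (cons_ne_nil _ _) = (b :: l₂).getLast (cons_ne_nil b l₂) := by
  cases l₂ with
  | nil => simpa using hlast
  | cons z l₂ =>
    rw [getLast_cons_cons, getLast_cons (by simp), getLast_append_of_ne_nil (by simp)]

end List

section

variable {A : V → V → Prop}

theorem Dom.mono {S T : Set V} (hS : Dom A S) (hST : S ⊆ T) : Dom A T := fun v =>
  (hS v).imp (@hST v) fun ⟨u, hu, huv⟩ => ⟨u, hST hu, huv⟩

/-- The strong component of `v` is a source of the condensation. -/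
def IsSourceRoot (A : V → V → Prop) (v : V) : Prop :=
  ∀ u, ReflTransGen A u v → ReflTransGen A v u

theorem exists_isSourceRoot [Finite V] [Nonempty V] (A : V → V → Prop) :
    ∃ v, IsSourceRoot A v := by
  obtain ⟨v, -, hv⟩ := Set.finite_univ.exists_maximalFor
    (fun w => {u | ReflTransGen A w u}) Set.univ Set.univ_nonempty
  exact ⟨v, fun u huv => hv (Set.mem_univ u) (fun x hx => huv.trans hx) ReflTransGen.refl⟩

theorem mem_strongComp_self (v : V) : v ∈ StrongComp A v :=
  ⟨ReflTransGen.refl, ReflTransGen.refl⟩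

theorem IsSourceRoot.mem_strongComp {v u : V} (hv : IsSourceRoot A v)
    (huv : ReflTransGen A u v) : u ∈ StrongComp A v :=
  ⟨hv u huv, huv⟩

theorem IsSourceRoot.not_rel_into_strongComp {v : V} (hv : IsSourceRoot A v) :
    ∀ u ∉ StrongComp A v, ∀ s ∈ StrongComp A v, ¬ A u s := fun _ hu _ hs hus =>
  hu (hv.mem_strongComp ((ReflTransGen.single hus).trans hs.2))

theorem IsSourceRoot.dom_strongComp {ι : Type*} {P : V → ι} (hor : IsCMPOrientation A P)
    {v : V} (hv : IsSourceRoot A v) (hin : ∃ u, A u v) : Dom A (StrongComp A v) := by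
  intro w
  by_contra! hw
  obtain ⟨hwC, hno⟩ := hw
  have hpart : ∀ s ∈ StrongComp A v, P s = P w := fun s hs => by
    by_contra hne
    have hws : A w s := (hor.2 w s (Ne.symm hne)).2 (hno s hs)
    exact hv.not_rel_into_strongComp w hwC s hs hws
  obtain ⟨u, huv⟩ := hin
  have huC : u ∈ StrongComp A v := hv.mem_strongComp (ReflTransGen.single huv)
  exact hor.1 u v huv ((hpart u huC).trans (hpart v (mem_strongComp_self v)).symm)

theorem exists_closed_chain_through_strongComp (v : V) (S : Finset V)
    (hS : ↑S ⊆ StrongComp A v) :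
    ∃ l, List.IsChain A (v :: l) ∧ (v :: l).getLast (List.cons_ne_nil v l) = v ∧
      ∀ u ∈ S, u ∈ v :: l := by
  classical
  induction S using Finset.induction_on with
  | empty => exact ⟨[], List.IsChain.singleton v, rfl, by simp⟩
  | insert u S _ ih =>
    rw [Finset.coe_insert, Set.insert_subset_iff] at hS
    obtain ⟨l, hl, hlast, hlS⟩ := ih hS.2
    obtain ⟨p, hp, hplast⟩ := List.exists_isChain_cons_of_relationReflTransGen hS.1.1
    obtain ⟨q, hq, hqlast⟩ := List.exists_isChain_cons_of_relationReflTransGen hS.1.2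
    have hpq := hp.cons_append_of_getLast_eq hplast hq
    have hpq_last : (v :: (p ++ q)).getLast (List.cons_ne_nil _ _) = v :=
      (List.getLast_cons_append_of_getLast_eq hplast).trans hqlast
    refine ⟨p ++ q ++ l, hpq.cons_append_of_getLast_eq hpq_last hl,
      (List.getLast_cons_append_of_getLast_eq hpq_last).trans hlast, fun x hx => ?_⟩
    rcases Finset.mem_insert.1 hx with rfl | hxS
    · have hxp : x ∈ v :: p := hplast ▸ List.getLast_mem (List.cons_ne_nil v p)
      simp only [List.mem_cons, List.mem_append] at hxp ⊢
      tauto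
    · have hxl := hlS x hxS
      simp only [List.mem_cons, List.mem_append] at hxl ⊢
      tauto

theorem isClosedWalk_of_isChain_cons_append_singleton {v : V} {l : List V}
    (hl : List.IsChain A (v :: l ++ [v])) : IsClosedWalk A (v :: l) := by
  rw [List.isChain_append] at hl
  refine ⟨List.cons_ne_nil v l, hl.1, Or.inr fun a b ha hb => ?_⟩
  have hva : v = a := by simpa using ha
  exact hva ▸ hl.2.2 b hb v rfl

theorem exists_isClosedWalk_superset_strongComp [Finite V] (v : V) :
    ∃ l, IsClosedWalk A l ∧ StrongComp A v ⊆ {x | x ∈ l} := by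
  have hC := (StrongComp A v).toFinite
  obtain ⟨l, hl, hlast, hCl⟩ :=
    exists_closed_chain_through_strongComp (A := A) v hC.toFinset (by simp)
  obtain rfl | ⟨l, w, rfl⟩ := l.eq_nil_or_concat'
  · exact ⟨[v], ⟨List.cons_ne_nil v [], hl, Or.inl rfl⟩, fun x hx => hCl x (hC.mem_toFinset.2 hx)⟩
  · have hwv : w = v := by simpa using hlast
    subst w
    rw [← List.cons_append] at hl
    refine ⟨v :: l, isClosedWalk_of_isChain_cons_append_singleton hl, fun x hx => ?_⟩
    have hx' := hCl x (hC.mem_toFinset.2 hx)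
    simp only [List.mem_cons, List.mem_append] at hx'
    exact List.mem_cons.2 (by tauto)

theorem hasCDW_of_dom_strongComp [Finite V] {v : V} (hdom : Dom A (StrongComp A v)) :
    HasCDW A :=
  let ⟨l, hl, hCl⟩ := exists_isClosedWalk_superset_strongComp v
  ⟨l, hl, hdom.mono hCl⟩

end

theorem stmt5_general [Fintype V] [Nonempty V] {ι : Type*}
    (A : V → V → Prop) (P : V → ι)
    (hor : IsCMPOrientation A P) (hin : ∀ v, ∃ u, A u v) :
    (∃ v : V, (∀ u ∉ StrongComp A v, ∀ s ∈ StrongComp A v, ¬ A u s) ∧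
      Dom A (StrongComp A v)) ∧ HasCDW A := by
  obtain ⟨v, hv⟩ := exists_isSourceRoot A
  have hdom := hv.dom_strongComp hor (hin v)
  exact ⟨⟨v, hv.not_rel_into_strongComp, hdom⟩, hasCDW_of_dom_strongComp hdom⟩

theorem stmt5 [Fintype V] [Nonempty V] {ι : Type*} [Fintype ι]
    (A : V → V → Prop) (P : V → ι)
    (hor : IsCMPOrientation A P) (hk : 2 ≤ Fintype.card ι)
    (hsurj : Function.Surjective P) (hin : ∀ v, ∃ u, A u v) :
    (∃ v : V, (∀ u ∉ StrongComp A v, ∀ s ∈ StrongComp A v, ¬ A u s) ∧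
      Dom A (StrongComp A v)) ∧ HasCDW A :=
  stmt5_general A P hor hin
end

section
/- In any tournament T with γ(T) > 1, every minimum closed dominating walk visits each of its vertices exactly once (i.e., no watchman's walk repeats vertices). -/
variable {V : Type*}

/-!
A closed walk in a tournament that repeats a vertex is beaten by a cycle through exactly its
vertices: the cycle dominates the same vertices and is strictly shorter. Such a cycle exists since
the vertices of a closed walk induce a strong subtournament, and strong tournaments are
Hamiltonian (Camion). A cycle `C` short of the whole vertex set grows: a vertex outside `C` with
both an in- and an out-neighbour on `C` can be inserted between two consecutive vertices of `C`;
if there is none, every outside vertex beats all of `C` or is beaten by all of `C`, and strong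
connectivity yields an arc `z → w` from the second kind to the first, giving the detour
`x → z → w → x⁺` for any consecutive `x, x⁺` on `C`.
-/

section

variable {A : V → V → Prop}

theorem IsTournament.asymm (hT : IsTournament A) {u v : V} (huv : A u v) : ¬ A v u := by
  obtain rfl | hne := eq_or_ne u v
  · exact absurd huv (hT.1 u)
  · exact (hT.2 u v hne).1 huv

theorem IsTournament.of_not_adj (hT : IsTournament A) {u v : V} (hne : u ≠ v) (huv : ¬ A u v) :
    A v u :=
  (hT.2 v u hne.symm).2 huv

theorem isClosedWalk_iff_cycle_chain {l : List V} :
    IsClosedWalk A l ↔ l ≠ [] ∧ (l.length = 1 ∨ (l : Cycle V).Chain A) := by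
  change l ≠ [] ∧ l.IsChain A ∧ _ ↔ _
  rcases l with _ | ⟨x, _ | ⟨y, s⟩⟩
  · simp
  · simp
  · rw [Cycle.chain_coe_cons, ← List.cons_append, List.isChain_append]
    simp
    grind

theorem IsClosedWalk.of_isRotated {l l' : List V} (hl : IsClosedWalk A l) (h : l ~r l') :
    IsClosedWalk A l' := by
  rw [isClosedWalk_iff_cycle_chain] at hl ⊢
  rw [← Cycle.coe_eq_coe.2 h, ← h.perm.length_eq]
  exact ⟨fun h' => hl.1 (List.isRotated_nil_iff.1 (h' ▸ h)), hl.2⟩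

theorem IsClosedWalk.exists_rotate_cons {l : List V} (hl : IsClosedWalk A l) {x : V}
    (hx : x ∈ l) : ∃ s, IsClosedWalk A (x :: s) ∧ (x :: s).Perm l := by
  obtain ⟨p, q, rfl⟩ := List.append_of_mem hx
  have hrot : (x :: q ++ p) ~r (p ++ x :: q) := List.isRotated_append
  exact ⟨q ++ p, hl.of_isRotated hrot.symm, hrot.perm⟩

theorem isClosedWalk_cons_iff {x : V} {s : List V} :
    IsClosedWalk A (x :: s) ↔ s = [] ∨ (x :: (s ++ [x])).IsChain A := by
  simp [isClosedWalk_iff_cycle_chain]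

theorem IsClosedWalk.stronglyConnectedOn {l : List V} (hl : IsClosedWalk A l) :
    StronglyConnectedOn A {v | v ∈ l} := by
  intro u hu v hv
  obtain ⟨s, hs, hperm⟩ := hl.exists_rotate_cons hu
  have hchain : (u :: s).IsChain (fun a b => a ∈ l ∧ b ∈ l ∧ A a b) :=
    hs.2.1.imp_of_mem_imp fun a b ha hb hab => ⟨hperm.subset ha, hperm.subset hb, hab⟩
  exact hchain.induction (Relation.ReflTransGen _ u) _ (fun _ _ hab hu => hu.tail hab)
    (fun _ => .refl) v (hperm.mem_iff.2 hv)

theorem StronglyConnectedOn.exists_adj_of_pred_of_not_pred {S : Set V}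
    (hS : StronglyConnectedOn A S)
    {P : V → Prop} {a b : V} (ha : a ∈ S) (hb : b ∈ S) (hPa : P a) (hPb : ¬ P b) :
    ∃ u ∈ S, ∃ v ∈ S, P u ∧ ¬ P v ∧ A u v := by
  induction hS a ha b hb with
  | refl => exact absurd hPa hPb
  | @tail c d _ hcd ih =>
    by_cases hPc : P c
    · exact ⟨c, hcd.1, d, hcd.2.1, hPc, hPb, hcd.2.2⟩
    · exact ih hcd.1 hPc

/-- `w` goes in just before the first vertex of `l ++ [b]` that it beats. -/
theorem IsTournament.exists_isChain_insert (hT : IsTournament A) {w b : V} :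
    ∀ {a : V} {l : List V}, (a :: (l ++ [b])).IsChain A → A a w → w ∉ l →
      (∃ y ∈ l ++ [b], A w y) → ∃ l', l'.Perm (w :: l) ∧ (a :: (l' ++ [b])).IsChain A
  | a, [], hchain, haw, _, hy => by
    obtain ⟨y, hy, hwy⟩ := hy
    rw [List.nil_append, List.mem_singleton] at hy
    subst hy
    exact ⟨[w], .refl _, by simp [haw, hwy]⟩
  | a, c :: l, hchain, haw, hwl, hy => by
    rw [List.cons_append, List.isChain_cons_cons] at hchain
    by_cases hwc : A w c
    · exact ⟨w :: c :: l, .refl _, List.isChain_cons_cons.2 ⟨haw, .cons_cons hwc hchain.2⟩⟩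
    have hcw : A c w := hT.of_not_adj (fun h => hwl (h ▸ List.mem_cons_self)) hwc
    have hy' : ∃ y ∈ l ++ [b], A w y := by
      obtain ⟨y, hy, hwy⟩ := hy
      rcases List.mem_cons.1 hy with rfl | hy
      · exact absurd hwy hwc
      · exact ⟨y, hy, hwy⟩
    obtain ⟨l', hperm, hl'⟩ :=
      hT.exists_isChain_insert hchain.2 hcw (fun h => hwl (List.mem_cons_of_mem c h)) hy'
    exact ⟨c :: l', (hperm.cons c).trans (.swap w c l), .cons_cons hchain.1 hl'⟩

theorem IsClosedWalk.exists_insert (hT : IsTournament A) {c : List V} (hc : IsClosedWalk A c)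
    {x y w : V} (hx : x ∈ c) (hy : y ∈ c) (hxw : A x w) (hwy : A w y) (hwc : w ∉ c) :
    ∃ c', IsClosedWalk A c' ∧ c'.Perm (w :: c) := by
  obtain ⟨s, hs, hperm⟩ := hc.exists_rotate_cons hx
  rcases isClosedWalk_cons_iff.1 hs with rfl | hchain
  · have hyx : y = x := by simpa using hperm.mem_iff.2 hy
    exact absurd hxw (hT.asymm (hyx ▸ hwy))
  have hy' : y ∈ s ++ [x] := (List.perm_append_singleton x s).mem_iff.2 (hperm.mem_iff.2 hy)
  obtain ⟨l', hl'perm, hl'⟩ := hT.exists_isChain_insert hchain hxw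
    (fun h => hwc (hperm.subset (List.mem_cons_of_mem x h))) ⟨y, hy', hwy⟩
  refine ⟨x :: l', isClosedWalk_cons_iff.2 (.inr hl'), ?_⟩
  exact ((hl'perm.cons x).trans (.swap w x s)).trans (hperm.cons w)

theorem IsClosedWalk.exists_detour {c : List V} (hc : IsClosedWalk A c) {x z w : V} (hx : x ∈ c)
    (hxz : A x z) (hzw : A z w) (hwc : ∀ v ∈ c, A w v) :
    ∃ c', IsClosedWalk A c' ∧ c'.Perm (z :: w :: c) := by
  obtain ⟨s, hs, hperm⟩ := hc.exists_rotate_cons hx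
  have htail : (s ++ [x]).IsChain A := by
    rcases isClosedWalk_cons_iff.1 hs with rfl | hchain
    exacts [List.isChain_singleton x, hchain.tail]
  have hw : (w :: (s ++ [x])).IsChain A := htail.cons fun v hv =>
    hwc v (hperm.subset ((List.perm_append_singleton x s).subset (List.mem_of_mem_head? hv)))
  refine ⟨x :: z :: w :: s, isClosedWalk_cons_iff.2 (.inr (.cons_cons hxz (.cons_cons hzw hw))),
    ?_⟩
  exact ((List.Perm.swap z x _).trans ((List.Perm.swap w x s).cons z)).trans
    ((hperm.cons w).cons z)

theorem IsTournament.exists_adj_dominated_dominating (hT : IsTournament A) {S : Set V}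
    (hS : StronglyConnectedOn A S) {c : List V} (hcS : ∀ v ∈ c, v ∈ S) {a u : V} (ha : a ∈ c)
    (hu : u ∈ S) (huc : u ∉ c) (hins : ∀ w ∈ S, w ∉ c → (∃ x ∈ c, A x w) → ∀ y ∈ c, ¬ A w y) :
    ∃ z ∈ S, ∃ w ∈ S, z ∉ c ∧ w ∉ c ∧ (∀ v ∈ c, A v z) ∧ (∀ v ∈ c, A w v) ∧ A z w := by
  have hdom : ∀ w ∈ S, w ∉ c → ¬ (∀ v ∈ c, A v w) → ∀ v ∈ c, A w v := by
    intro w hwS hwc hnot v hv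
    push Not at hnot
    obtain ⟨x, hx, hxw⟩ := hnot
    have hwx : A w x := hT.of_not_adj (ne_of_mem_of_not_mem hx hwc) hxw
    by_contra hwv
    exact hins w hwS hwc ⟨v, hv, hT.of_not_adj (ne_of_mem_of_not_mem hv hwc).symm hwv⟩ x hx hwx
  let Z : V → Prop := fun v => v ∉ c ∧ ∀ x ∈ c, A x v
  obtain ⟨z₀, hz₀S, hz₀⟩ : ∃ z ∈ S, Z z := by
    by_contra! hZ
    obtain ⟨x, -, w, hwS, hx, hw, hxw⟩ :=
      hS.exists_adj_of_pred_of_not_pred (P := (· ∈ c)) (hcS a ha) hu ha huc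
    exact hT.asymm hxw (hdom w hwS hw (fun h => hZ w hwS ⟨hw, h⟩) x hx)
  obtain ⟨z, hzS, w, hwS, hz, hw, hzw⟩ :=
    hS.exists_adj_of_pred_of_not_pred (P := Z) hz₀S (hcS a ha) hz₀ (fun h => h.1 ha)
  have hwc : w ∉ c := fun hwc => hT.asymm hzw (hz.2 w hwc)
  exact ⟨z, hzS, w, hwS, hz.1, hwc, hz.2, hdom w hwS hwc (fun h => hw ⟨hwc, h⟩), hzw⟩

theorem IsTournament.exists_longer_cycle (hT : IsTournament A) {S : Set V}
    (hS : StronglyConnectedOn A S) {c : List V} (hc : IsClosedWalk A c) (hnd : c.Nodup)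
    (hcS : ∀ v ∈ c, v ∈ S) {u : V} (hu : u ∈ S) (huc : u ∉ c) :
    ∃ c', IsClosedWalk A c' ∧ c'.Nodup ∧ (∀ v ∈ c', v ∈ S) ∧ c.length < c'.length := by
  obtain ⟨a, ha⟩ := List.exists_mem_of_ne_nil c hc.1
  by_cases hins : ∃ w ∈ S, w ∉ c ∧ (∃ x ∈ c, A x w) ∧ ∃ y ∈ c, A w y
  · obtain ⟨w, hwS, hwc, ⟨x, hx, hxw⟩, y, hy, hwy⟩ := hins
    obtain ⟨c', hc', hperm⟩ := hc.exists_insert hT hx hy hxw hwy hwc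
    refine ⟨c', hc', hperm.nodup_iff.2 (hnd.cons hwc), fun v hv => ?_, by simp [hperm.length_eq]⟩
    rcases List.mem_cons.1 (hperm.subset hv) with rfl | hv
    exacts [hwS, hcS v hv]
  · push Not at hins
    obtain ⟨z, hzS, w, hwS, hzc, hwc, hcz, hwc', hzw⟩ :=
      hT.exists_adj_dominated_dominating hS hcS ha hu huc hins
    obtain ⟨c', hc', hperm⟩ := hc.exists_detour ha (hcz a ha) hzw hwc'
    have hzw' : z ∉ w :: c := by
      rw [List.mem_cons]
      rintro (rfl | hz)
      exacts [hT.1 z hzw, hzc hz]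
    refine ⟨c', hc', hperm.nodup_iff.2 ((hnd.cons hwc).cons hzw'), fun v hv => ?_,
      by simp [hperm.length_eq]⟩
    obtain rfl | rfl | hv : v = z ∨ v = w ∨ v ∈ c := by simpa using hperm.subset hv
    exacts [hzS, hwS, hcS v hv]

theorem IsTournament.exists_spanning_cycle_of_cycle (hT : IsTournament A) {S : Finset V}
    (hS : StronglyConnectedOn A S) {c : List V} (hc : IsClosedWalk A c) (hnd : c.Nodup)
    (hcS : ∀ v ∈ c, v ∈ S) : ∃ c', IsClosedWalk A c' ∧ c'.Nodup ∧ ∀ v, v ∈ c' ↔ v ∈ S := by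
  by_cases hfull : ∀ v ∈ S, v ∈ c
  · exact ⟨c, hc, hnd, fun v => ⟨hcS v, hfull v⟩⟩
  push Not at hfull
  obtain ⟨u, hu, huc⟩ := hfull
  obtain ⟨c', hc', hnd', hc'S, hlt⟩ := hT.exists_longer_cycle hS hc hnd hcS hu huc
  exact hT.exists_spanning_cycle_of_cycle hS hc' hnd' hc'S
termination_by S.card - c.length
decreasing_by
  classical
  have : c'.length ≤ S.card :=
    List.toFinset_card_of_nodup hnd' ▸
      Finset.card_le_card fun v hv => hc'S v (List.mem_toFinset.1 hv)
  omega

/-- The growth starts from the one-vertex walk `[a]`, which `IsClosedWalk` admits. -/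
theorem IsTournament.exists_spanning_cycle (hT : IsTournament A) {S : Finset V}
    (hS : StronglyConnectedOn A S) (hne : S.Nonempty) :
    ∃ c, IsClosedWalk A c ∧ c.Nodup ∧ ∀ v, v ∈ c ↔ v ∈ S :=
  let ⟨a, ha⟩ := hne
  hT.exists_spanning_cycle_of_cycle hS ⟨List.cons_ne_nil a [], .singleton a, .inl rfl⟩
    (List.nodup_singleton a) (by simpa using ha)

theorem walkLength_le_length (l : List V) : walkLength l ≤ l.length := by
  unfold walkLength
  split <;> omega

theorem walkLength_eq_length_of_not_nodup {l : List V} (hl : ¬ l.Nodup) :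
    walkLength l = l.length := by
  rw [walkLength, if_neg]
  intro hlen
  obtain ⟨a, rfl⟩ := List.length_eq_one_iff.1 hlen
  exact hl (List.nodup_singleton a)

theorem watchman_le_walkLength {l : List V} (hl : IsCDW A l) : watchman A ≤ walkLength l :=
  Nat.sInf_le ⟨l, hl, rfl⟩

end

theorem stmt14_general (A : V → V → Prop) (hT : IsTournament A) :
    ∀ l, IsCDW A l → walkLength l = watchman A → l.Nodup := by
  classical
  intro l ⟨hl, hdom⟩ hmin
  by_contra hnd
  have hS : StronglyConnectedOn A l.toFinset := by
    rw [List.coe_toFinset]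
    exact hl.stronglyConnectedOn
  obtain ⟨c, hc, hcnd, hcl⟩ :=
    hT.exists_spanning_cycle hS ((List.toFinset_nonempty_iff l).2 hl.1)
  have hcdw : IsCDW A c := ⟨hc, by simpa [hcl] using hdom⟩
  have hlt : walkLength c < walkLength l := calc
    walkLength c ≤ c.length := walkLength_le_length c
    _ = l.toFinset.card := by
      rw [← List.toFinset_card_of_nodup hcnd]
      congr 1
      ext v
      simp [hcl]
    _ < l.length := lt_of_le_of_ne l.toFinset_card_le
      (mt Multiset.toFinset_card_eq_card_iff_nodup.1 hnd)
    _ = walkLength l := (walkLength_eq_length_of_not_nodup hnd).symm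
  exact (watchman_le_walkLength hcdw).not_gt (hmin ▸ hlt)

theorem stmt14 [Fintype V] (A : V → V → Prop) (hT : IsTournament A)
    (hγ : 1 < domNum A) :
    ∀ l, IsCDW A l → walkLength l = watchman A → l.Nodup :=
  stmt14_general A hT
end
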